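/- Let 0 < q < 1, and let a, b, c be real numbers with |c/(ab)| < 1 (and generic so that denominators are nonzero). Then ∑_{p=0}^{∞} (c/(ab))^p (a;q)_p (b;q)_p / ((q;q)_p (c;q)_p) = (c/a;q)_∞ (c/b;q)_∞ / ((c;q)_∞ (c/(ab);q)_∞). In particular, the q-hypergeometric weights ψ_{q,a,b,c}(p) := (c/(ab))^p ((a;q)_p (b;q)_p/((q;q)_p (c;q)_p)) · ((c;q)_∞ (c/(ab);q)_∞ / ((c/a;q)_∞ (c/b;q)_∞)) sum to 1 over p ≥ 0. -/

import Mathlib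

open Filter Topology MeasureTheory

/-- Finite q-Pochhammer symbol `(a;q)_n`. -/
noncomputable def qPoch (a q : ℝ) (n : ℕ) : ℝ := ∏ i ∈ Finset.range n, (1 - a * q ^ i)

/-- Infinite q-Pochhammer symbol `(a;q)_∞`. -/
noncomputable def qPochInf (a q : ℝ) : ℝ := ∏' i : ℕ, (1 - a * q ^ i)

/-- The q-beta-binomial weight `φ_{q,μ,ν}(s|y)`. -/
noncomputable def phiW (q μ ν : ℝ) (s y : ℕ) : ℝ :=
  μ ^ s * (qPoch (ν / μ) q s * qPoch μ q (y - s) / qPoch ν q y) *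
    (qPoch q q y / (qPoch q q s * qPoch q q (y - s)))

/-- The weight `φ_{q,μ,ν}(s|∞)`. -/
noncomputable def phiInfW (q μ ν : ℝ) (s : ℕ) : ℝ :=
  μ ^ s * (qPoch (ν / μ) q s / qPoch q q s) * (qPochInf μ q / qPochInf ν q)

/-- The q-hypergeometric weight `ψ_{q,a,b,c}(p)`. -/
noncomputable def psiW (q a b c : ℝ) (p : ℕ) : ℝ :=
  (c / (a * b)) ^ p * (qPoch a q p * qPoch b q p / (qPoch q q p * qPoch c q p)) *
    (qPochInf c q * qPochInf (c / (a * b)) q / (qPochInf (c / a) q * qPochInf (c / b) q))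

/-- The q-Hahn PushTASEP update probability `P_{ℓ,g}(L)`. -/
noncomputable def Phahn (q μ ν : ℝ) (ℓ g L : ℕ) : ℝ :=
  ∑ p ∈ Finset.range (min ℓ L + 1),
    phiW q⁻¹ (q ^ g) (μ * ν * q ^ ((g : ℤ) - 1)) p ℓ *
      psiW q (ν * μ⁻¹ * q ^ p) (ν * q ^ g) (ν ^ 2 * q ^ (g + p)) (L - p)


section QGaussAux
set_option maxHeartbeats 1000000

lemma hasProd_of_tail {f : ℕ → ℝ} {P : ℝ} (N : ℕ) (h : HasProd (fun n => f (n + N)) P) :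
    HasProd f ((∏ i ∈ Finset.range N, f i) * P) := by
  have hφ : Tendsto (fun s : Finset ℕ => (s.filter (fun x => N ≤ x)).image (· - N))
      atTop atTop := by
    rw [tendsto_atTop_atTop]
    intro t
    refine ⟨t.image (· + N), fun s hs => ?_⟩
    intro x hx
    simp only [Finset.mem_image, Finset.mem_filter]
    exact ⟨x + N, ⟨hs (Finset.mem_image_of_mem _ hx), Nat.le_add_left _ _⟩, by omega⟩
  have h2 := (h.comp hφ).const_mul (∏ i ∈ Finset.range N, f i)
  refine h2.congr' ?_
  filter_upwards [eventually_ge_atTop (Finset.range N)] with s hs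
  have hsplit : ∏ i ∈ s, f i
      = (∏ i ∈ s.filter (fun x => ¬ N ≤ x), f i) * ∏ i ∈ s.filter (fun x => N ≤ x), f i :=
    by rw [← Finset.prod_filter_mul_prod_filter_not s (fun x => N ≤ x) f]; ring
  have h3 : s.filter (fun x => ¬ N ≤ x) = Finset.range N := by
    ext x; simp only [Finset.mem_filter, Finset.mem_range, not_le]
    exact ⟨fun h => h.2, fun h => ⟨hs (Finset.mem_range.2 h), h⟩⟩
  have h4 : ∏ i ∈ (s.filter (fun x => N ≤ x)).image (· - N), f (i + N)
      = ∏ i ∈ s.filter (fun x => N ≤ x), f i := by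
    rw [Finset.prod_image (fun x hx y hy hxy => by
      simp only [Finset.coe_filter, Set.mem_setOf_eq, Finset.mem_filter, Finset.mem_coe] at hx hy; omega)]
    refine Finset.prod_congr rfl fun x hx => ?_
    simp only [Finset.mem_filter] at hx
    congr 1; omega
  simp only [Function.comp]
  rw [h4, hsplit, h3]


lemma abs_log_one_add_le' {t : ℝ} (ht : |t| ≤ 1/2) : |Real.log (1 + t)| ≤ 2 * |t| := by
  have h1 : (0:ℝ) < 1 + t := by cases abs_le.1 ht; linarith
  rw [abs_le]
  constructor
  · have := Real.log_le_sub_one_of_pos (x := (1+t)⁻¹) (by positivity)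
    rw [Real.log_inv] at this
    have h2 : (1+t)⁻¹ - 1 = -t/(1+t) := by field_simp; ring
    have h3 : -t/(1+t) ≤ 2*|t| := by
      rw [div_le_iff₀ h1]
      have := abs_le.1 ht
      nlinarith [abs_nonneg t, neg_abs_le t, le_abs_self t]
    nlinarith [this, h2 ▸ this]
  · have := Real.log_le_sub_one_of_pos h1
    have := le_abs_self t
    have := abs_nonneg t
    linarith

lemma multipliable_small {q y : ℝ} (hq0 : 0 < q) (hq1 : q < 1) (hy : |y| ≤ 1/2) :
    Multipliable (fun i : ℕ => 1 - y * q ^ i) := by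
  have hpos : ∀ (_ : Unit) (i : ℕ), 0 < (fun i : ℕ => fun _ : Unit => 1 - y * q ^ i) i () := by
    intro _ i
    have h1 : |y * q ^ i| ≤ 1/2 := by
      rw [abs_mul, abs_pow, abs_of_pos hq0]
      calc |y| * q ^ i ≤ (1/2) * 1 := by
            apply mul_le_mul hy (pow_le_one₀ hq0.le hq1.le) (by positivity) (by norm_num)
        _ = 1/2 := by norm_num
    have := abs_le.1 h1
    simp only []
    linarith
  have hsum : ∀ (_ : Unit), Summable fun i : ℕ =>
      Real.log ((fun i : ℕ => fun _ : Unit => 1 - y * q ^ i) i ()) := by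
    intro _
    apply Summable.of_norm_bounded (g := fun i => 2 * (|y| * q ^ i))
    · exact (summable_geometric_of_lt_one hq0.le hq1).mul_left _ |>.mul_left 2
    · intro i
      have h1 : |y * q ^ i| ≤ 1/2 := by
        rw [abs_mul, abs_pow, abs_of_pos hq0]
        calc |y| * q ^ i ≤ (1/2) * 1 := by
              apply mul_le_mul hy (pow_le_one₀ hq0.le hq1.le) (by positivity) (by norm_num)
          _ = 1/2 := by norm_num
      have := abs_log_one_add_le' (t := -(y * q ^ i)) (by rwa [abs_neg])
      simp only [Real.norm_eq_abs]
      calc |Real.log (1 - y * q ^ i)| = |Real.log (1 + -(y * q ^ i))| := by ring_nf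
        _ ≤ 2 * |(-(y * q^i))| := this
        _ = 2 * (|y| * q ^ i) := by rw [abs_neg, abs_mul, abs_pow, abs_of_pos hq0]
  exact Real.multipliable_of_summable_log (fun i => hpos () i) (hsum ())
variable {q : ℝ}

lemma multipliable_main (hq0 : 0 < q) (hq1 : q < 1) (y : ℝ) :
    Multipliable (fun i : ℕ => 1 - y * q ^ i) := by
  obtain ⟨N, hN⟩ : ∃ N : ℕ, q ^ N < 1/(2*(|y|+1)) :=
    exists_pow_lt_of_lt_one (by positivity) hq1
  have hyN : |y * q ^ N| ≤ 1/2 := by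
    rw [abs_mul, abs_pow, abs_of_pos hq0]
    have h0 : |y| * q ^ N ≤ |y| * (1/(2*(|y|+1))) :=
      mul_le_mul_of_nonneg_left hN.le (abs_nonneg y)
    have h1 : |y| * (1/(2*(|y|+1))) ≤ 1/2 := by
      have h2 : (0:ℝ) < 2*(|y|+1) := by positivity
      rw [mul_one_div, div_le_div_iff₀ h2 (by norm_num : (0:ℝ) < 2)]
      nlinarith [abs_nonneg y]
    linarith
  have htail := (multipliable_small hq0 hq1 hyN).hasProd
  have heq : (fun i : ℕ => 1 - y * q ^ N * q ^ i) = (fun i : ℕ => 1 - y * q ^ (i + N)) :=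
    funext fun i => by rw [pow_add]; ring
  rw [heq] at htail
  exact (hasProd_of_tail N htail).multipliable

lemma qPochInf_split (hq0 : 0 < q) (hq1 : q < 1) (y : ℝ) (k : ℕ) :
    qPochInf y q = qPoch y q k * qPochInf (y * q ^ k) q := by
  have htail : HasProd (fun i : ℕ => 1 - y * q ^ k * q ^ i) (qPochInf (y * q ^ k) q) :=
    (multipliable_main hq0 hq1 (y * q ^ k)).hasProd
  have heq : (fun i : ℕ => 1 - y * q ^ k * q ^ i) = (fun i : ℕ => 1 - y * q ^ (i + k)) :=
    funext fun i => by rw [pow_add]; ring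
  rw [heq] at htail
  exact (hasProd_of_tail k htail).tprod_eq

lemma qPoch_ne_zero_of_inf (hq0 : 0 < q) (hq1 : q < 1) {y : ℝ} (h : qPochInf y q ≠ 0)
    (k : ℕ) : qPoch y q k ≠ 0 := by
  intro h0
  rw [qPochInf_split hq0 hq1 y k, h0, zero_mul] at h
  exact h rfl

lemma factor_ne_zero_of_inf (hq0 : 0 < q) (hq1 : q < 1) {y : ℝ} (h : qPochInf y q ≠ 0)
    (j : ℕ) : 1 - y * q ^ j ≠ 0 := by
  have := qPoch_ne_zero_of_inf hq0 hq1 h (j + 1)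
  rw [qPoch, Finset.prod_ne_zero_iff] at this
  exact this j (Finset.mem_range.2 (Nat.lt_succ_self j))

lemma tendsto_qPoch (hq0 : 0 < q) (hq1 : q < 1) (y : ℝ) :
    Tendsto (fun k => qPoch y q k) atTop (𝓝 (qPochInf y q)) :=
  (multipliable_main hq0 hq1 y).hasProd.tendsto_prod_nat

lemma tendsto_qPochInf_shift (hq0 : 0 < q) (hq1 : q < 1) {y : ℝ} (h : qPochInf y q ≠ 0) :
    Tendsto (fun k => qPochInf (y * q ^ k) q) atTop (𝓝 1) := by
  have heq : (fun k => qPochInf (y * q ^ k) q) = fun k => qPochInf y q / qPoch y q k :=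
    funext fun k => by
      rw [qPochInf_split hq0 hq1 y k, mul_div_cancel_left₀ _ (qPoch_ne_zero_of_inf hq0 hq1 h k)]
  rw [heq, show (1:ℝ) = qPochInf y q / qPochInf y q from (div_self h).symm]
  exact tendsto_const_nhds.div (tendsto_qPoch hq0 hq1 y) h

noncomputable def qT (q a b w : ℝ) (p : ℕ) : ℝ :=
  (w / (a * b)) ^ p * (qPoch a q p * qPoch b q p / (qPoch q q p * qPoch w q p))

lemma qPoch_succ (x q : ℝ) (n : ℕ) : qPoch x q (n + 1) = qPoch x q n * (1 - x * q ^ n) :=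
  Finset.prod_range_succ _ _

lemma qPoch_succ' (x q : ℝ) (n : ℕ) : qPoch x q (n + 1) = (1 - x) * qPoch (x * q) q n := by
  rw [qPoch, Finset.prod_range_succ']
  simp only [pow_zero, mul_one]
  rw [mul_comm, qPoch]
  congr 1
  exact Finset.prod_congr rfl fun i _ => by rw [pow_succ']; ring

lemma qPoch_q_pos {q : ℝ} (hq0 : 0 < q) (hq1 : q < 1) (n : ℕ) : 0 < qPoch q q n := by
  apply Finset.prod_pos
  intro i _
  have : q * q ^ i ≤ q * 1 := by
    apply mul_le_mul_of_nonneg_left (pow_le_one₀ hq0.le hq1.le) hq0.le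
  simp only [mul_one] at this
  linarith

lemma qT_zero (q a b w : ℝ) : qT q a b w 0 = 1 := by
  simp [qT, qPoch]

lemma qT_succ {q a b w : ℝ} (hq0 : 0 < q) (hq1 : q < 1) (hw : ∀ j, 1 - w * q ^ j ≠ 0)
    (p : ℕ) : qT q a b w (p + 1) =
      qT q a b w p * (w / (a * b) *
        ((1 - a * q ^ p) * (1 - b * q ^ p) / ((1 - q * q ^ p) * (1 - w * q ^ p)))) := by
  have hq : qPoch q q p ≠ 0 := (qPoch_q_pos hq0 hq1 p).ne'
  have hqs : (1 : ℝ) - q * q ^ p ≠ 0 := by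
    have := qPoch_q_pos hq0 hq1 (p + 1)
    rw [qPoch_succ] at this
    intro h0
    rw [h0, mul_zero] at this
    exact lt_irrefl 0 this
  have hwp : qPoch w q p ≠ 0 := by
    rw [qPoch, Finset.prod_ne_zero_iff]
    exact fun i _ => hw i
  rw [qT, qT, qPoch_succ a, qPoch_succ b, qPoch_succ q, qPoch_succ w, pow_succ]
  field_simp

lemma summable_qT {q a b w : ℝ} (hq0 : 0 < q) (hq1 : q < 1) (hw : ∀ j, 1 - w * q ^ j ≠ 0)
    (hz : |w / (a * b)| < 1) : Summable (qT q a b w) := by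
  set r : ℝ := (1 + |w / (a * b)|) / 2 with hr
  have hr1 : r < 1 := by rw [hr]; linarith
  apply summable_of_ratio_norm_eventually_le hr1
  have htend : Tendsto (fun p : ℕ => w / (a * b) *
      ((1 - a * q ^ p) * (1 - b * q ^ p) / ((1 - q * q ^ p) * (1 - w * q ^ p)))) atTop
      (𝓝 (w / (a * b))) := by
    have hq : Tendsto (fun p : ℕ => q ^ p) atTop (𝓝 0) :=
      tendsto_pow_atTop_nhds_zero_of_lt_one hq0.le hq1
    have hone : ∀ x : ℝ, Tendsto (fun p : ℕ => 1 - x * q ^ p) atTop (𝓝 1) := by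
      intro x
      have h : Tendsto (fun p : ℕ => 1 - x * q ^ p) atTop (𝓝 (1 - x * 0)) :=
        Tendsto.sub tendsto_const_nhds (hq.const_mul x)
      simpa using h
    have hnum : Tendsto (fun p : ℕ => (1 - a * q ^ p) * (1 - b * q ^ p)) atTop (𝓝 1) := by
      have := (hone a).mul (hone b); simpa using this
    have hden : Tendsto (fun p : ℕ => (1 - q * q ^ p) * (1 - w * q ^ p)) atTop (𝓝 1) := by
      have := (hone q).mul (hone w); simpa using this
    have h1 : Tendsto (fun p : ℕ => (1 - a * q ^ p) * (1 - b * q ^ p) /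
        ((1 - q * q ^ p) * (1 - w * q ^ p))) atTop (𝓝 1) := by
      have := hnum.div hden one_ne_zero
      rw [div_one] at this
      exact this
    simpa using tendsto_const_nhds.mul h1
  have habs : Tendsto (fun p : ℕ => |w / (a * b) *
      ((1 - a * q ^ p) * (1 - b * q ^ p) / ((1 - q * q ^ p) * (1 - w * q ^ p)))|) atTop
      (𝓝 |w / (a * b)|) := htend.abs
  have hev : ∀ᶠ p : ℕ in atTop, |w / (a * b) *
      ((1 - a * q ^ p) * (1 - b * q ^ p) / ((1 - q * q ^ p) * (1 - w * q ^ p)))| ≤ r := by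
    apply Eventually.mono (habs.eventually (gt_mem_nhds (show |w / (a * b)| < r by
      rw [hr]; linarith)))
    intro p hp
    exact hp.le
  filter_upwards [hev] with p hp
  rw [qT_succ hq0 hq1 hw p, norm_mul, mul_comm (r : ℝ) _]
  exact mul_le_mul_of_nonneg_left (by rw [Real.norm_eq_abs]; exact hp) (norm_nonneg _)

lemma qT_key {q a b w : ℝ} (hq0 : 0 < q) (hq1 : q < 1) (ha : a ≠ 0) (hb : b ≠ 0)
    (hw : ∀ j, 1 - w * q ^ j ≠ 0) (p : ℕ) :
    (1 - w) * (1 - w / (a * b)) * qT q a b w p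
      - (1 - w / a) * (1 - w / b) * qT q a b (w * q) p
    = (1 - w) * (1 - q ^ p) * qT q a b w p
      - (1 - w) * (1 - q ^ (p + 1)) * qT q a b w (p + 1) := by
  have h1 : qPoch q q p ≠ 0 := (qPoch_q_pos hq0 hq1 p).ne'
  have h2 : qPoch w q p ≠ 0 := by
    rw [qPoch, Finset.prod_ne_zero_iff]; exact fun i _ => hw i
  have h3 : (1 : ℝ) - w ≠ 0 := by have := hw 0; rwa [pow_zero, mul_one] at this
  have h4 : (1 : ℝ) - w * q ^ p ≠ 0 := hw p
  have h5 : (1 : ℝ) - q * q ^ p ≠ 0 := by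
    have hle : q * q ^ p ≤ q * 1 :=
      mul_le_mul_of_nonneg_left (pow_le_one₀ hq0.le hq1.le) hq0.le
    rw [mul_one] at hle
    intro h0; linarith [hq1]
  have hwq : qPoch (w * q) q p = qPoch w q p * (1 - w * q ^ p) / (1 - w) := by
    have e1 : (1 - w) * qPoch (w * q) q p = qPoch w q (p + 1) := (qPoch_succ' w q p).symm
    rw [qPoch_succ] at e1
    field_simp
    linarith [e1]
  rw [qT, qT, qT, qPoch_succ a, qPoch_succ b, qPoch_succ q, qPoch_succ w, hwq,
    show w * q / (a * b) = w / (a * b) * q from by ring, mul_pow, pow_succ, pow_succ]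
  have h5' : (1 : ℝ) - q ^ p * q ≠ 0 := by rw [mul_comm]; exact h5
  field_simp
  ring

lemma funcEq {q a b w : ℝ} (hq0 : 0 < q) (hq1 : q < 1) (ha : a ≠ 0) (hb : b ≠ 0)
    (hw : ∀ j, 1 - w * q ^ j ≠ 0) (hz : |w / (a * b)| < 1) :
    (1 - w) * (1 - w / (a * b)) * ∑' p, qT q a b w p
      = (1 - w / a) * (1 - w / b) * ∑' p, qT q a b (w * q) p := by
  have hw' : ∀ j, 1 - (w * q) * q ^ j ≠ 0 := by
    intro j
    have h : 1 - (w * q) * q ^ j = 1 - w * q ^ (j + 1) := by rw [pow_succ]; ring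
    rw [h]; exact hw (j + 1)
  have hz2 : |w * q / (a * b)| < 1 := by
    have h : w * q / (a * b) = w / (a * b) * q := by ring
    rw [h, abs_mul, abs_of_pos hq0]
    nlinarith [abs_nonneg (w / (a * b))]
  have hS1 : Summable (qT q a b w) := summable_qT hq0 hq1 hw hz
  have hS2 : Summable (qT q a b (w * q)) := summable_qT hq0 hq1 hw' hz2
  set S : ℕ → ℝ := fun p => (1 - w) * (1 - q ^ p) * qT q a b w p with hSdef
  have hSg : Summable (fun p => q ^ p * qT q a b w p) := by
    apply Summable.of_norm_bounded hS1.abs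
    intro p
    rw [norm_mul, Real.norm_eq_abs, Real.norm_eq_abs, abs_pow, abs_of_pos hq0]
    calc q ^ p * |qT q a b w p| ≤ 1 * |qT q a b w p| :=
          mul_le_mul_of_nonneg_right (pow_le_one₀ hq0.le hq1.le) (abs_nonneg _)
      _ = |qT q a b w p| := one_mul _
  have hS3 : Summable S := by
    have := (hS1.mul_left (1 - w)).sub (hSg.mul_left (1 - w))
    exact this.congr fun p => by rw [hSdef]; ring
  have hS4 : Summable (fun p => S (p + 1)) := by
    rw [← summable_nat_add_iff 1] at hS3; exact hS3
  have hkey : ∀ p : ℕ,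
      (1 - w) * (1 - w / (a * b)) * qT q a b w p
        - (1 - w / a) * (1 - w / b) * qT q a b (w * q) p = S p - S (p + 1) :=
    fun p => qT_key hq0 hq1 ha hb hw p
  have e1 : (1 - w) * (1 - w / (a * b)) * ∑' p, qT q a b w p
      - (1 - w / a) * (1 - w / b) * ∑' p, qT q a b (w * q) p
      = ∑' p, ((1 - w) * (1 - w / (a * b)) * qT q a b w p
        - (1 - w / a) * (1 - w / b) * qT q a b (w * q) p) := by
    rw [Summable.tsum_sub (hS1.mul_left _) (hS2.mul_left _), tsum_mul_left, tsum_mul_left]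
  have e2 : ∑' p, ((1 - w) * (1 - w / (a * b)) * qT q a b w p
      - (1 - w / a) * (1 - w / b) * qT q a b (w * q) p) = ∑' p, (S p - S (p + 1)) :=
    tsum_congr hkey
  have e3 : ∑' p, (S p - S (p + 1)) = 0 := by
    rw [Summable.tsum_sub hS3 hS4]
    have := Summable.tsum_eq_zero_add hS3
    have hS0 : S 0 = 0 := by rw [hSdef]; simp
    rw [this, hS0, zero_add, sub_self]
  have := e1.trans (e2.trans e3)
  linarith [this]

lemma tendsto_F_one {q a b c : ℝ} (hq0 : 0 < q) (hq1 : q < 1)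
    (hc' : ∀ j, 1 - c * q ^ j ≠ 0) (hz : |c / (a * b)| < 1) :
    Tendsto (fun k => ∑' p, qT q a b (c * q ^ k) p) atTop (𝓝 1) := by
  have hqpow : Tendsto (fun k : ℕ => q ^ k) atTop (𝓝 0) :=
    tendsto_pow_atTop_nhds_zero_of_lt_one hq0.le hq1
  have h1q : (0:ℝ) < 1 - q := by linarith
  set M : ℝ := |c / (a * b)| * ((1 + |a|) * (1 + |b|) / ((1 - q) * (1/2))) with hM
  have hM0 : 0 ≤ M := by
    rw [hM]
    apply mul_nonneg (abs_nonneg _)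
    apply div_nonneg
    · nlinarith [abs_nonneg a, abs_nonneg b]
    · nlinarith
  have hwk : ∀ k j, 1 - (c * q ^ k) * q ^ j ≠ 0 := by
    intro k j
    have h : 1 - (c * q ^ k) * q ^ j = 1 - c * q ^ (k + j) := by rw [pow_add]; ring
    rw [h]; exact hc' (k + j)
  have hzk : ∀ k, |(c * q ^ k) / (a * b)| < 1 := by
    intro k
    have h : (c * q ^ k) / (a * b) = (c / (a * b)) * q ^ k := by ring
    rw [h, abs_mul, abs_pow, abs_of_pos hq0]
    calc |c / (a * b)| * q ^ k ≤ |c / (a * b)| * 1 :=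
          mul_le_mul_of_nonneg_left (pow_le_one₀ hq0.le hq1.le) (abs_nonneg _)
      _ = |c / (a * b)| := mul_one _
      _ < 1 := hz
  have hbound : ∀ᶠ k : ℕ in atTop, ‖(∑' p, qT q a b (c * q ^ k) p) - 1‖ ≤ 2 * M * q ^ k := by
    have hev1 : ∀ᶠ k : ℕ in atTop, |c| * q ^ k ≤ 1/2 := by
      have h := Tendsto.eventually_lt_const (show |c| * 0 < 1/2 by simp)
        (hqpow.const_mul |c|)
      exact h.mono fun k hk => hk.le
    have hev2 : ∀ᶠ k : ℕ in atTop, M * q ^ k ≤ 1/2 := by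
      have h := Tendsto.eventually_lt_const (show M * 0 < 1/2 by simp)
        (hqpow.const_mul M)
      exact h.mono fun k hk => hk.le
    filter_upwards [hev1, hev2] with k hk1 hk2
    set w : ℝ := c * q ^ k with hwdef
    set s : ℝ := M * q ^ k with hsdef
    have hw' : ∀ j, 1 - w * q ^ j ≠ 0 := hwk k
    have hz' : |w / (a * b)| < 1 := hzk k
    have hs0 : 0 ≤ s := by positivity
    have hs1 : s < 1 := lt_of_le_of_lt hk2 (by norm_num)
    have hind : ∀ p, |qT q a b w p| ≤ s ^ p := by
      intro p
      induction p with
      | zero => simp [qT_zero]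
      | succ p ih =>
        rw [qT_succ hq0 hq1 hw' p, pow_succ, abs_mul]
        refine mul_le_mul ih ?_ (abs_nonneg _) (pow_nonneg hs0 p)
        rw [abs_mul]
        have e0 : |w / (a * b)| = |c / (a * b)| * q ^ k := by
          rw [hwdef, show c * q ^ k / (a * b) = (c / (a * b)) * q ^ k from by ring,
            abs_mul, abs_pow, abs_of_pos hq0]
        have eA : |1 - a * q ^ p| ≤ 1 + |a| := by
          have h1 : |a * q ^ p| ≤ |a| := by
            rw [abs_mul, abs_pow, abs_of_pos hq0]
            calc |a| * q ^ p ≤ |a| * 1 :=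
                  mul_le_mul_of_nonneg_left (pow_le_one₀ hq0.le hq1.le) (abs_nonneg _)
              _ = |a| := mul_one _
          have h2 := neg_abs_le (a * q ^ p)
          have h3 := le_abs_self (a * q ^ p)
          rw [abs_le]; constructor <;> nlinarith [abs_nonneg (a * q ^ p)]
        have eB : |1 - b * q ^ p| ≤ 1 + |b| := by
          have h1 : |b * q ^ p| ≤ |b| := by
            rw [abs_mul, abs_pow, abs_of_pos hq0]
            calc |b| * q ^ p ≤ |b| * 1 :=
                  mul_le_mul_of_nonneg_left (pow_le_one₀ hq0.le hq1.le) (abs_nonneg _)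
              _ = |b| := mul_one _
          have h2 := neg_abs_le (b * q ^ p)
          have h3 := le_abs_self (b * q ^ p)
          rw [abs_le]; constructor <;> nlinarith [abs_nonneg (b * q ^ p)]
        have eC : (1 - q) ≤ |1 - q * q ^ p| := by
          have h1 : q * q ^ p ≤ q * 1 :=
            mul_le_mul_of_nonneg_left (pow_le_one₀ hq0.le hq1.le) hq0.le
          have h2 : 0 < q * q ^ p := by positivity
          rw [abs_of_pos (by nlinarith : (0:ℝ) < 1 - q * q ^ p)]
          nlinarith
        have eD : (1/2 : ℝ) ≤ |1 - w * q ^ p| := by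
          have h1 : |w * q ^ p| ≤ |c| * q ^ k := by
            rw [hwdef, show c * q ^ k * q ^ p = c * q ^ (k + p) from by rw [pow_add]; ring,
              abs_mul, abs_pow, abs_of_pos hq0]
            have : q ^ (k + p) ≤ q ^ k :=
              pow_le_pow_of_le_one hq0.le hq1.le (by omega)
            exact mul_le_mul_of_nonneg_left this (abs_nonneg _)
          have h4 : |w * q ^ p| ≤ 1/2 := le_trans h1 hk1
          rw [abs_le] at h4
          have h5 : (0:ℝ) < 1 - w * q ^ p := by linarith
          rw [abs_of_pos h5]; linarith
        calc |w / (a * b)| * |(1 - a * q ^ p) * (1 - b * q ^ p) /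
              ((1 - q * q ^ p) * (1 - w * q ^ p))|
            = |w / (a * b)| * (|(1 - a * q ^ p) * (1 - b * q ^ p)| /
              |(1 - q * q ^ p) * (1 - w * q ^ p)|) := by rw [abs_div, abs_div]
          _ ≤ |w / (a * b)| * ((1 + |a|) * (1 + |b|) / ((1 - q) * (1/2))) := by
              apply mul_le_mul_of_nonneg_left _ (abs_nonneg _)
              apply div_le_div₀ _ _ (by nlinarith) _
              · nlinarith [abs_nonneg a, abs_nonneg b]
              · rw [abs_mul]
                exact mul_le_mul eA eB (abs_nonneg _) (by positivity)
              · rw [abs_mul]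
                exact mul_le_mul eC eD (by norm_num) (abs_nonneg _)
          _ = s := by rw [e0, hsdef, hM]; ring
    have hSk : Summable (qT q a b w) := summable_qT hq0 hq1 hw' hz'
    have hsum_s : Summable (fun p : ℕ => s ^ (p + 1)) := by
      have := (summable_geometric_of_lt_one hs0 hs1).mul_left s
      exact this.congr fun p => by rw [pow_succ]; ring
    have e1 : (∑' p, qT q a b w p) - 1 = ∑' p, qT q a b w (p + 1) := by
      rw [Summable.tsum_eq_zero_add hSk, qT_zero]
      ring
    rw [e1]
    have hnorm_sum : Summable (fun p : ℕ => ‖qT q a b w (p + 1)‖) := by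
      apply Summable.of_nonneg_of_le (fun p => norm_nonneg _) (fun p => ?_) hsum_s
      rw [Real.norm_eq_abs]; exact hind (p + 1)
    have e2 : ‖∑' p, qT q a b w (p + 1)‖ ≤ ∑' p : ℕ, s ^ (p + 1) :=
      (norm_tsum_le_tsum_norm hnorm_sum).trans
        (Summable.tsum_le_tsum (fun p => by rw [Real.norm_eq_abs]; exact hind (p + 1)) hnorm_sum hsum_s)
    have e3 : ∑' p : ℕ, s ^ (p + 1) = s * (1 - s)⁻¹ := by
      rw [show (fun p : ℕ => s ^ (p + 1)) = fun p : ℕ => s * s ^ p from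
        funext fun p => by rw [pow_succ]; ring, tsum_mul_left,
        tsum_geometric_of_lt_one hs0 hs1]
    have e4 : s * (1 - s)⁻¹ ≤ 2 * M * q ^ k := by
      have h6 : (1 - s)⁻¹ ≤ 2 := by
        have h7 : (1 - s)⁻¹ ≤ ((1:ℝ)/2)⁻¹ := by
          apply inv_anti₀ (by norm_num) (by linarith)
        simpa using h7
      calc s * (1 - s)⁻¹ ≤ s * 2 := by
            apply mul_le_mul_of_nonneg_left h6 hs0
        _ = 2 * M * q ^ k := by rw [hsdef]; ring
    exact e2.trans (e3 ▸ e4)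
  have h0 : Tendsto (fun k => (∑' p, qT q a b (c * q ^ k) p) - 1) atTop (𝓝 0) := by
    apply squeeze_zero_norm' hbound
    have h := hqpow.const_mul (2 * M)
    simpa using h
  have := h0.add_const 1
  simpa using this

lemma main_identity {q a b c : ℝ} (hq0 : 0 < q) (hq1 : q < 1) (hz : |c / (a * b)| < 1)
    (ha : a ≠ 0) (hb : b ≠ 0)
    (hc' : ∀ j, 1 - c * q ^ j ≠ 0)
    (hcInf : qPochInf c q ≠ 0) (hzInf : qPochInf (c / (a * b)) q ≠ 0)
    (hca : qPochInf (c / a) q ≠ 0) (hcb : qPochInf (c / b) q ≠ 0) :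
    (∑' p, qT q a b c p) * (qPochInf c q * qPochInf (c / (a * b)) q)
      = qPochInf (c / a) q * qPochInf (c / b) q := by
  set D : ℕ → ℝ := fun k => (∑' p, qT q a b (c * q ^ k) p) *
    (qPochInf (c * q ^ k) q * qPochInf (c / (a * b) * q ^ k) q) with hD
  set N : ℕ → ℝ := fun k => qPochInf (c / a * q ^ k) q * qPochInf (c / b * q ^ k) q with hN
  have hwk : ∀ k j, 1 - (c * q ^ k) * q ^ j ≠ 0 := by
    intro k j
    have h : 1 - (c * q ^ k) * q ^ j = 1 - c * q ^ (k + j) := by rw [pow_add]; ring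
    rw [h]; exact hc' (k + j)
  have hzk : ∀ k : ℕ, |(c * q ^ k) / (a * b)| < 1 := by
    intro k
    have h : (c * q ^ k) / (a * b) = (c / (a * b)) * q ^ k := by ring
    rw [h, abs_mul, abs_pow, abs_of_pos hq0]
    calc |c / (a * b)| * q ^ k ≤ |c / (a * b)| * 1 :=
          mul_le_mul_of_nonneg_left (pow_le_one₀ hq0.le hq1.le) (abs_nonneg _)
      _ = |c / (a * b)| := mul_one _
      _ < 1 := hz
  have split1 : ∀ x : ℝ, qPochInf x q = (1 - x) * qPochInf (x * q) q := by
    intro x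
    have h := qPochInf_split hq0 hq1 x 1
    rw [qPoch, Finset.prod_range_one, pow_zero, mul_one, pow_one] at h
    exact h
  have step : ∀ k : ℕ, D k - N k
      = (1 - (c / a) * q ^ k) * (1 - (c / b) * q ^ k) * (D (k + 1) - N (k + 1)) := by
    intro k
    have hfe := funcEq hq0 hq1 ha hb (hwk k) (hzk k)
    rw [show (c * q ^ k) * q = c * q ^ (k + 1) from by rw [pow_succ]; ring,
      show c * q ^ k / (a * b) = (c / (a * b)) * q ^ k from by ring,
      show c * q ^ k / a = (c / a) * q ^ k from by ring,
      show c * q ^ k / b = (c / b) * q ^ k from by ring] at hfe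
    have s1 : qPochInf (c * q ^ k) q
        = (1 - c * q ^ k) * qPochInf (c * q ^ (k + 1)) q := by
      have h := split1 (c * q ^ k)
      rwa [show (c * q ^ k) * q = c * q ^ (k + 1) from by rw [pow_succ]; ring] at h
    have s2 : qPochInf (c / (a * b) * q ^ k) q
        = (1 - c / (a * b) * q ^ k) * qPochInf (c / (a * b) * q ^ (k + 1)) q := by
      have h := split1 (c / (a * b) * q ^ k)
      rwa [show (c / (a * b) * q ^ k) * q = c / (a * b) * q ^ (k + 1) from by
        rw [pow_succ]; ring] at h
    have s3 : qPochInf (c / a * q ^ k) q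
        = (1 - c / a * q ^ k) * qPochInf (c / a * q ^ (k + 1)) q := by
      have h := split1 (c / a * q ^ k)
      rwa [show (c / a * q ^ k) * q = c / a * q ^ (k + 1) from by rw [pow_succ]; ring] at h
    have s4 : qPochInf (c / b * q ^ k) q
        = (1 - c / b * q ^ k) * qPochInf (c / b * q ^ (k + 1)) q := by
      have h := split1 (c / b * q ^ k)
      rwa [show (c / b * q ^ k) * q = c / b * q ^ (k + 1) from by rw [pow_succ]; ring] at h
    rw [hD, hN]
    simp only []
    rw [s1, s2, s3, s4]
    linear_combination (qPochInf (c * q ^ (k + 1)) q * qPochInf (c / (a * b) * q ^ (k + 1)) q) * hfe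
  have chain : ∀ k : ℕ, D 0 - N 0
      = qPoch (c / a) q k * qPoch (c / b) q k * (D k - N k) := by
    intro k
    induction k with
    | zero => simp [qPoch]
    | succ k ih =>
      rw [ih, step k, qPoch_succ, qPoch_succ]
      ring
  have hDlim : Tendsto D atTop (𝓝 1) := by
    have h1 := tendsto_F_one (a := a) (b := b) hq0 hq1 hc' hz
    have h2 := tendsto_qPochInf_shift hq0 hq1 hcInf
    have h3 := tendsto_qPochInf_shift hq0 hq1 hzInf
    have := h1.mul (h2.mul h3)
    rw [hD]
    simpa using this
  have hNlim : Tendsto N atTop (𝓝 1) := by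
    have h2 := tendsto_qPochInf_shift hq0 hq1 hca
    have h3 := tendsto_qPochInf_shift hq0 hq1 hcb
    have := h2.mul h3
    rw [hN]
    simpa using this
  have hlim0 : Tendsto (fun k => qPoch (c / a) q k * qPoch (c / b) q k * (D k - N k))
      atTop (𝓝 0) := by
    have := ((tendsto_qPoch hq0 hq1 (c / a)).mul (tendsto_qPoch hq0 hq1 (c / b))).mul
      (hDlim.sub hNlim)
    simpa using this
  have hmain : D 0 - N 0 = 0 := by
    have hconst : Tendsto (fun _ : ℕ => D 0 - N 0) atTop (𝓝 (D 0 - N 0)) := tendsto_const_nhds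
    have h := hconst.congr fun k => chain k
    exact tendsto_nhds_unique h hlim0
  have hDN : D 0 = N 0 := by linarith
  rw [hD, hN] at hDN
  simp only [pow_zero, mul_one] at hDN
  exact hDN

end QGaussAux

set_option maxHeartbeats 1000000 in
/-- Heine's q-Gauss summation formula, and normalization of the q-hypergeometric weights. -/
theorem stmt_2 (q a b c : ℝ) (hq0 : 0 < q) (hq1 : q < 1) (hz : |c / (a * b)| < 1)
    (hab : a * b ≠ 0)
    (hc : ∀ p : ℕ, qPoch c q p ≠ 0)
    (hcInf : qPochInf c q ≠ 0) (hzInf : qPochInf (c / (a * b)) q ≠ 0)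
    (hca : qPochInf (c / a) q ≠ 0) (hcb : qPochInf (c / b) q ≠ 0) :
    (∑' p : ℕ, (c / (a * b)) ^ p * (qPoch a q p * qPoch b q p / (qPoch q q p * qPoch c q p))
        = qPochInf (c / a) q * qPochInf (c / b) q / (qPochInf c q * qPochInf (c / (a * b)) q))
      ∧ ∑' p : ℕ, psiW q a b c p = 1 := by 
  have ha : a ≠ 0 := left_ne_zero_of_mul hab
  have hb : b ≠ 0 := right_ne_zero_of_mul hab
  have hc' : ∀ j, 1 - c * q ^ j ≠ 0 := by
    intro j
    have h := hc (j + 1)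
    rw [qPoch, Finset.prod_ne_zero_iff] at h
    exact h j (Finset.mem_range.2 (Nat.lt_succ_self j))
  have hMain := main_identity hq0 hq1 hz ha hb hc' hcInf hzInf hca hcb
  have hLHS : (∑' p : ℕ, (c / (a * b)) ^ p *
      (qPoch a q p * qPoch b q p / (qPoch q q p * qPoch c q p))) = ∑' p, qT q a b c p :=
    tsum_congr fun p => rfl
  constructor
  · rw [hLHS, eq_div_iff (mul_ne_zero hcInf hzInf)]
    exact hMain
  · have hpsi : (fun p : ℕ => psiW q a b c p) = fun p => qT q a b c p *
        (qPochInf c q * qPochInf (c / (a * b)) q /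
          (qPochInf (c / a) q * qPochInf (c / b) q)) :=
      funext fun p => by simp only [psiW, qT]
    rw [show (∑' p : ℕ, psiW q a b c p) = ∑' p : ℕ, qT q a b c p *
        (qPochInf c q * qPochInf (c / (a * b)) q /
          (qPochInf (c / a) q * qPochInf (c / b) q)) from by rw [hpsi],
      tsum_mul_right]
    have e : (∑' p, qT q a b c p) * (qPochInf c q * qPochInf (c / (a * b)) q /
        (qPochInf (c / a) q * qPochInf (c / b) q))
        = ((∑' p, qT q a b c p) * (qPochInf c q * qPochInf (c / (a * b)) q)) /
          (qPochInf (c / a) q * qPochInf (c / b) q) := by ring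
    rw [e, hMain, div_self (mul_ne_zero hca hcb)]
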